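/- On the free step-2 Carnot group $\mathbb{F}_r$, the symmetrized horizontal Hessian of the gauge $\rho = (|x_H|^4+|x_V|^2)^{1/4}$ satisfies $(D^2_{\mathbb{F}_r}\rho)^* = \frac{3|x_H|^2}{\rho^4}\rho\, I_r - \frac{3}{\rho}D_{\mathbb{F}_r}\rho\otimes D_{\mathbb{F}_r}\rho$ at points with $\rho\neq0$; equivalently, $X_iX_k\rho + X_kX_i\rho = \frac{6|x_H|^2}{\rho^3}\delta_{ik} - \frac{6}{\rho}(X_i\rho)(X_k\rho)$ for all $1\leq i,k\leq r$. -/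

import Mathlib

noncomputable section

/-- Gauge `ρ = (|x_H|⁴ + |x_V|²)^{1/4}` on the free step-2 Carnot group `𝔽_r`. -/
def rhoF {r : ℕ} (p : (Fin r → ℝ) × (Fin r → Fin r → ℝ)) : ℝ :=
  ((∑ i, p.1 i ^ 2) ^ 2 + ∑ k, ∑ j, if j < k then p.2 k j ^ 2 else 0) ^ (1/4 : ℝ)

/-- Partial derivative `∂_k u` (horizontal coordinate `x_k`). -/
def pdXF {r : ℕ} (k : Fin r) (u : (Fin r → ℝ) × (Fin r → Fin r → ℝ) → ℝ)
    (p : (Fin r → ℝ) × (Fin r → Fin r → ℝ)) : ℝ :=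
  deriv (fun s => u (Function.update p.1 k s, p.2)) (p.1 k)

/-- Partial derivative `∂_{ab} u` (vertical coordinate `t_{ab}`). -/
def pdTF {r : ℕ} (a b : Fin r) (u : (Fin r → ℝ) × (Fin r → Fin r → ℝ) → ℝ)
    (p : (Fin r → ℝ) × (Fin r → Fin r → ℝ)) : ℝ :=
  deriv (fun s => u (p.1, Function.update p.2 a (Function.update (p.2 a) b s))) (p.2 a b)

/-- The generator `X_k = ∂_k + 2(∑_{j>k} x_j ∂_{jk} - ∑_{j<k} x_j ∂_{kj})` of `𝔽_r`. -/
def XF {r : ℕ} (k : Fin r) (u : (Fin r → ℝ) × (Fin r → Fin r → ℝ) → ℝ)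
    (p : (Fin r → ℝ) × (Fin r → Fin r → ℝ)) : ℝ :=
  pdXF k u p + 2 * ((∑ j, if k < j then p.1 j * pdTF j k u p else 0)
    - ∑ j, if j < k then p.1 j * pdTF k j u p else 0)

/-!
Along the generator `X_k` the point `p` moves on the line `p + t • genVec k p`, so for
differentiable `u` the value `X_k u (p)` is the line derivative of `u` in the direction
`genVec k p`. Writing the vertical coordinates as the skew-symmetric matrix `T` and
`ρ⁴ = |x_H|⁴ + |T|²/2`, one finds `X_k ρ = z_k / ρ³` with `z_k = |x_H|² x_k + ∑_j x_j T_{jk}`,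
and `X_i z_k = 3|x_H|² δ_{ik} + T_{ik}`. Hence
`X_i X_k ρ = (3|x_H|² δ_{ik} + T_{ik}) / ρ³ - 3 z_i z_k / ρ⁷`, and the skew part `T_{ik}`
cancels on symmetrization.
-/

namespace FreeCarnot

abbrev Pt (r : ℕ) := (Fin r → ℝ) × (Fin r → Fin r → ℝ)

variable {r : ℕ}

def genVec (k : Fin r) (p : Pt r) : Pt r :=
  (Pi.single k 1, fun a b =>
    if b < a then 2 * ((if b = k then p.1 a else 0) - if a = k then p.1 b else 0) else 0)

lemma genVec_eq (k : Fin r) (p : Pt r) :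
    genVec k p = (Pi.single k 1, 0)
      + (2 : ℝ) • ((∑ j, if k < j then p.1 j • ((0 : Fin r → ℝ), Pi.single j (Pi.single k 1))
          else 0)
        - ∑ j, if j < k then p.1 j • ((0 : Fin r → ℝ), Pi.single k (Pi.single j 1)) else 0) := by
  ext a b
  · simp [genVec, Prod.fst_sum, apply_ite (f := Prod.fst)]
  · have hev : ∀ (c : Prop) [Decidable c] (M : Fin r → Fin r → ℝ),
        (if c then M else 0) a b = if c then M a b else 0 := fun c _ M => by split_ifs <;> rfl
    simp only [genVec, Prod.snd_add, Prod.snd_sub, Prod.snd_sum, apply_ite Prod.snd,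
      Prod.smul_snd, Prod.snd_zero, Pi.add_apply, Pi.smul_apply, Pi.sub_apply, Finset.sum_apply,
      hev]
    rw [Fintype.sum_eq_single a (fun j hj => by simp [hj.symm]),
      Fintype.sum_eq_single b (fun j hj => by
        simp [Pi.single_apply, apply_ite (fun f : Fin r → ℝ => f b), hj.symm])]
    by_cases hb : b = k <;> by_cases ha : a = k <;> subst_vars <;> split_ifs <;> simp_all

section Generators

variable {u : Pt r → ℝ} {p : Pt r}

lemma pdXF_eq_fderiv (hu : DifferentiableAt ℝ u p) (k : Fin r) :
    pdXF k u p = fderiv ℝ u p (Pi.single k 1, 0) := by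
  have hc : HasDerivAt (fun s => (Function.update p.1 k s, p.2)) (Pi.single k 1, 0) (p.1 k) :=
    (hasDerivAt_update p.1 k _).prodMk (hasDerivAt_const _ _)
  exact (hu.hasFDerivAt.comp_hasDerivAt_of_eq _ hc (by simp)).deriv

lemma pdTF_eq_fderiv (hu : DifferentiableAt ℝ u p) (a b : Fin r) :
    pdTF a b u p = fderiv ℝ u p (0, Pi.single a (Pi.single b 1)) := by
  have hc : HasDerivAt (fun s => (p.1, Function.update p.2 a (Function.update (p.2 a) b s)))
      (0, Pi.single a (Pi.single b 1)) (p.2 a b) := by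
    refine (hasDerivAt_const _ _).prodMk ?_
    convert (hasFDerivAt_update p.2 (i := a) _).comp_hasDerivAt _
      (hasDerivAt_update (p.2 a) b _) using 1 <;>
    · ext c d
      by_cases hc : c = a
      · subst hc; simp
      · simp [hc]
  exact (hu.hasFDerivAt.comp_hasDerivAt_of_eq _ hc (by simp)).deriv

lemma XF_eq_fderiv (hu : DifferentiableAt ℝ u p) (k : Fin r) :
    XF k u p = fderiv ℝ u p (genVec k p) := by
  simp only [genVec_eq, map_add, map_smul, map_sub, map_sum, apply_ite, map_zero, XF,
    pdXF_eq_fderiv hu, pdTF_eq_fderiv hu, smul_eq_mul]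

lemma XF_eq_of_hasLineDerivAt {u' : ℝ} {k : Fin r} (hu : DifferentiableAt ℝ u p)
    (h : HasLineDerivAt ℝ u u' p (genVec k p)) : XF k u p = u' := by
  rw [XF_eq_fderiv hu, ← hu.lineDeriv_eq_fderiv, h.lineDeriv]

end Generators

def horizNormSq (p : Pt r) : ℝ := ∑ i, p.1 i ^ 2

/-- The skew-symmetric matrix `T` of the vertical coordinates. -/
def skewT (p : Pt r) (a b : Fin r) : ℝ :=
  if b < a then p.2 a b else if a < b then -p.2 b a else 0

def rhoPow4 (p : Pt r) : ℝ := horizNormSq p ^ 2 + (∑ a, ∑ b, skewT p a b ^ 2) / 2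

/-- `z_k = ρ³ X_k ρ`. -/
def gradNum (k : Fin r) (p : Pt r) : ℝ := horizNormSq p * p.1 k + ∑ j, p.1 j * skewT p j k

lemma skewT_swap (p : Pt r) (a b : Fin r) : skewT p b a = -skewT p a b := by
  unfold skewT
  rcases lt_trichotomy a b with h | rfl | h
  · simp [h, h.not_gt]
  · simp
  · simp [h, h.not_gt]

lemma sum_sum_skewT_sq (p : Pt r) :
    ∑ a, ∑ b, skewT p a b ^ 2 = 2 * ∑ k, ∑ j, if j < k then p.2 k j ^ 2 else 0 := by
  have hsq : ∀ a b, skewT p a b ^ 2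
      = (if b < a then p.2 a b ^ 2 else 0) + if a < b then p.2 b a ^ 2 else 0 := by
    intro a b
    unfold skewT
    rcases lt_trichotomy a b with h | rfl | h
    · simp [h, h.not_gt]
    · simp
    · simp [h, h.not_gt]
  simp only [hsq, Finset.sum_add_distrib]
  rw [Finset.sum_comm (f := fun a b => if a < b then p.2 b a ^ 2 else 0)]
  ring

lemma rhoF_eq (p : Pt r) : rhoF p = rhoPow4 p ^ (1 / 4 : ℝ) := by
  rw [rhoF, rhoPow4, sum_sum_skewT_sq, horizNormSq]
  ring_nf

@[fun_prop]
lemma differentiable_skewT (a b : Fin r) : Differentiable ℝ (fun p : Pt r => skewT p a b) := by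
  unfold skewT
  split_ifs <;> fun_prop

lemma differentiable_rhoPow4 : Differentiable ℝ (rhoPow4 (r := r)) := by
  unfold rhoPow4 horizNormSq
  fun_prop

@[fun_prop]
lemma differentiable_gradNum (k : Fin r) : Differentiable ℝ (gradNum (r := r) k) := by
  unfold gradNum horizNormSq
  fun_prop

lemma genVec_line_fst (k : Fin r) (p : Pt r) (t : ℝ) (l : Fin r) :
    (p + t • genVec k p).1 l = p.1 l + t * if l = k then 1 else 0 := by
  simp [genVec, Pi.single_apply]

lemma skewT_genVec_line (k : Fin r) (p : Pt r) (t : ℝ) (a b : Fin r) :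
    skewT (p + t • genVec k p) a b
      = skewT p a b + t * (2 * ((if b = k then p.1 a else 0) - if a = k then p.1 b else 0)) := by
  unfold skewT
  rcases lt_trichotomy a b with h | rfl | h
  · simp [genVec, h, h.not_gt]
    ring
  · simp
  · simp [genVec, h]

lemma hasLineDerivAt_horizNormSq (k : Fin r) (p : Pt r) :
    HasLineDerivAt ℝ horizNormSq (2 * p.1 k) p (genVec k p) := by
  unfold HasLineDerivAt
  simp only [horizNormSq, genVec_line_fst]
  convert HasDerivAt.fun_sum (u := Finset.univ) fun l _ =>
    ((hasDerivAt_mul_const (if l = k then (1 : ℝ) else 0)).const_add (p.1 l)).fun_pow 2 using 1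
  simp

lemma hasLineDerivAt_rhoPow4 (k : Fin r) (p : Pt r) :
    HasLineDerivAt ℝ rhoPow4 (4 * gradNum k p) p (genVec k p) := by
  have hT : HasDerivAt (fun t : ℝ => ∑ a, ∑ b, skewT (p + t • genVec k p) a b ^ 2)
      (∑ a, ∑ b, 2 * skewT p a b
        * (2 * ((if b = k then p.1 a else 0) - if a = k then p.1 b else 0))) 0 := by
    simp only [skewT_genVec_line]
    refine (HasDerivAt.fun_sum (u := Finset.univ) fun a _ => HasDerivAt.fun_sum
      (u := Finset.univ) fun b _ =>
        ((hasDerivAt_mul_const _).const_add (skewT p a b)).fun_pow 2).congr_deriv ?_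
    simp
  unfold HasLineDerivAt
  refine (((hasLineDerivAt_horizNormSq k p).fun_pow 2).fun_add (hT.div_const 2)).congr_deriv ?_
  simp [mul_sub, mul_ite, Finset.sum_sub_distrib, Finset.sum_ite_eq', gradNum, skewT_swap p _ k]
  rw [mul_add, Finset.mul_sum]
  congr 1
  · ring
  · exact Finset.sum_congr rfl fun _ _ => by ring

lemma hasLineDerivAt_gradNum (k j : Fin r) (p : Pt r) :
    HasLineDerivAt ℝ (gradNum j)
      (3 * horizNormSq p * (if j = k then 1 else 0) + skewT p k j) p (genVec k p) := by
  unfold HasLineDerivAt gradNum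
  simp only [genVec_line_fst, skewT_genVec_line]
  refine (((hasLineDerivAt_horizNormSq k p).mul ((hasDerivAt_mul_const _).const_add _)).add
    (HasDerivAt.fun_sum (u := Finset.univ) fun a _ =>
      ((hasDerivAt_mul_const _).const_add _).mul
        ((hasDerivAt_mul_const _).const_add _))).congr_deriv ?_
  have hA : ∑ a, p.1 a * (2 * p.1 a) = 2 * horizNormSq p := by
    rw [horizNormSq, Finset.mul_sum]
    exact Finset.sum_congr rfl fun _ _ => by ring
  simp [mul_sub, mul_ite, Finset.sum_add_distrib, Finset.sum_sub_distrib, Finset.sum_ite_eq', hA]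
  split_ifs <;> ring

lemma rhoPow4_nonneg (p : Pt r) : 0 ≤ rhoPow4 p := by
  unfold rhoPow4
  positivity

lemma rhoF_pow_four (p : Pt r) : rhoF p ^ 4 = rhoPow4 p := by
  rw [rhoF_eq, ← Real.rpow_natCast, ← Real.rpow_mul (rhoPow4_nonneg p)]
  norm_num

section Gauge

variable {p : Pt r}

lemma rhoF_pos (hp : 0 < rhoPow4 p) : 0 < rhoF p := by
  rw [rhoF_eq]
  positivity

lemma differentiableAt_rhoF (hp : 0 < rhoPow4 p) : DifferentiableAt ℝ rhoF p := by
  simp_rw [funext rhoF_eq]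
  exact (differentiable_rhoPow4 p).rpow_const (Or.inl hp.ne')

lemma hasLineDerivAt_rhoF (hp : 0 < rhoPow4 p) (k : Fin r) :
    HasLineDerivAt ℝ rhoF (gradNum k p / rhoF p ^ 3) p (genVec k p) := by
  have h := HasDerivAt.rpow_const (p := 1 / 4) (hasLineDerivAt_rhoPow4 k p)
    (Or.inl (by simpa using hp.ne'))
  have hρ : rhoPow4 p ^ (1 / 4 - 1 : ℝ) = rhoF p / rhoF p ^ 4 := by
    rw [Real.rpow_sub hp, Real.rpow_one, rhoF_pow_four, rhoF_eq]
  have hpos := rhoF_pos hp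
  rw [HasLineDerivAt, funext fun t => rhoF_eq (p + t • genVec k p)]
  refine h.congr_deriv ?_
  rw [zero_smul, add_zero, hρ]
  field_simp

lemma XF_rhoF (hp : 0 < rhoPow4 p) (k : Fin r) : XF k rhoF p = gradNum k p / rhoF p ^ 3 :=
  XF_eq_of_hasLineDerivAt (differentiableAt_rhoF hp) (hasLineDerivAt_rhoF hp k)

lemma XF_XF_rhoF (hp : 0 < rhoPow4 p) (i k : Fin r) :
    XF i (XF k rhoF) p = (3 * horizNormSq p * (if k = i then 1 else 0) + skewT p i k) / rhoF p ^ 3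
      - 3 * gradNum i p * gradNum k p / rhoF p ^ 7 := by
  have hev : XF k rhoF =ᶠ[nhds p] fun q => gradNum k q / rhoF q ^ 3 := by
    filter_upwards [(isOpen_lt continuous_const differentiable_rhoPow4.continuous).mem_nhds hp]
      with q hq using XF_rhoF hq k
  have hρ := rhoF_pos hp
  have hG : DifferentiableAt ℝ (fun q => gradNum k q / rhoF q ^ 3) p := by
    have := differentiableAt_rhoF hp
    fun_prop (disch := exact pow_ne_zero 3 hρ.ne')
  rw [XF_eq_fderiv (hG.congr_of_eventuallyEq hev), hev.fderiv_eq, ← XF_eq_fderiv hG]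
  refine XF_eq_of_hasLineDerivAt hG ((HasDerivAt.fun_div (hasLineDerivAt_gradNum i k p)
    (HasDerivAt.fun_pow (hasLineDerivAt_rhoF hp i) 3) ?_).congr_deriv ?_)
  · simpa using hρ.ne'
  · simp only [zero_smul, add_zero]
    field_simp
    ring

end Gauge

end FreeCarnot

open FreeCarnot

/-- on `𝔽_r`, at points with `ρ ≠ 0`, the symmetrized horizontal Hessian
of the gauge satisfies `XᵢXₖρ + XₖXᵢρ = (6|x_H|²/ρ³)δᵢₖ - (6/ρ)(Xᵢρ)(Xₖρ)`, i.e.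
`(D²_{𝔽_r}ρ)* = (3|x_H|²/ρ⁴)ρ I_r - (3/ρ) D_{𝔽_r}ρ ⊗ D_{𝔽_r}ρ`. -/
theorem stmt15 (r : ℕ) (p : (Fin r → ℝ) × (Fin r → Fin r → ℝ)) (hρ : rhoF p ≠ 0) :
    ∀ i k : Fin r,
      XF i (XF k rhoF) p + XF k (XF i rhoF) p
        = 6 * (∑ l, p.1 l ^ 2) / rhoF p ^ 3 * (if i = k then (1 : ℝ) else 0)
          - 6 / rhoF p * (XF i rhoF p * XF k rhoF p) := by
  intro i k
  have hp : 0 < rhoPow4 p := by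
    refine (rhoPow4_nonneg p).lt_of_ne fun h => hρ ?_
    rw [rhoF_eq, ← h, Real.zero_rpow (by norm_num)]
  have hpos := rhoF_pos hp
  rw [XF_XF_rhoF hp, XF_XF_rhoF hp, XF_rhoF hp, XF_rhoF hp, skewT_swap p i k]
  change _ = 6 * horizNormSq p / _ * _ - _
  by_cases h : i = k
  · subst h
    simp only [if_true]
    field_simp
    ring
  · simp only [h, Ne.symm h, if_false]
    field_simp
    ring
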